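/- arXiv:1210.8161 — 6 statements merged into one kernel-verified Lean document; each statement's English description precedes it below -/
import Mathlib

section
/- Let k be a field and N ≥ 1. The map sending a weakly decreasing function a : Fin N → ℤ to the double coset of diag(t^{a 0}, …, t^{a (N−1)}) in GL_N(k[t]) \ GL_N(k[t,t⁻¹]) / GL_N(k[t⁻¹]) is a bijection from the set of weakly decreasing integer N-tuples to the set of these double cosets. -/
open LaurentPolynomial

/-- The subring `k[t]` of the Laurent polynomial ring `k[t,t⁻¹]`:
the image of the polynomial ring under `Polynomial.toLaurent`. -/
noncomputable def polySubring (k : Type*) [Field k] : Subring (LaurentPolynomial k) :=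
  (Polynomial.toLaurent (R := k)).range

/-- The subring `k[t⁻¹]` of the Laurent polynomial ring `k[t,t⁻¹]`:
the image of `k[t]` under the inversion `t ↦ t⁻¹`. -/
noncomputable def invPolySubring (k : Type*) [Field k] : Subring (LaurentPolynomial k) :=
  (polySubring k).map (LaurentPolynomial.invert (R := k)).toRingEquiv.toRingHom

/-- The subgroup of `GL_N(R)` of matrices `M` such that both `M` and `M⁻¹` have all
entries in the subring `S` of `R`. -/
def entriesSubgroup {R : Type*} [CommRing R] (N : ℕ) (S : Subring R) :
    Subgroup (GL (Fin N) R) where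
  carrier := {M | (∀ i j, (M : Matrix (Fin N) (Fin N) R) i j ∈ S) ∧
    (∀ i j, ((M⁻¹ : GL (Fin N) R) : Matrix (Fin N) (Fin N) R) i j ∈ S)}
  one_mem' := by
    constructor <;>
    · intro i j
      simp only [inv_one, Units.val_one, Matrix.one_apply]
      split_ifs
      · exact S.one_mem
      · exact S.zero_mem
  mul_mem' := by
    rintro A B ⟨hA, hA'⟩ ⟨hB, hB'⟩
    constructor
    · intro i j
      rw [Units.val_mul, Matrix.mul_apply]
      exact Subring.sum_mem _ fun c _ => S.mul_mem (hA i c) (hB c j)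
    · intro i j
      rw [mul_inv_rev, Units.val_mul, Matrix.mul_apply]
      exact Subring.sum_mem _ fun c _ => S.mul_mem (hB' i c) (hA' c j)
  inv_mem' := by
    rintro A ⟨hA, hA'⟩
    exact ⟨hA', by simpa using hA⟩

/-- The diagonal matrix `diag(t^{a 0}, …, t^{a (N-1)})` as an element of
`GL_N(k[t,t⁻¹])`. -/
noncomputable def diagT (k : Type*) [Field k] (N : ℕ) (a : Fin N → ℤ) :
    GL (Fin N) (LaurentPolynomial k) :=
  ⟨Matrix.diagonal fun i => LaurentPolynomial.T (a i),
   Matrix.diagonal fun i => LaurentPolynomial.T (-a i),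
   by
     rw [Matrix.diagonal_mul_diagonal]
     have h : ∀ i, LaurentPolynomial.T (R := k) (a i) * LaurentPolynomial.T (-a i) = 1 :=
       fun i => by rw [← LaurentPolynomial.T_add, add_neg_cancel, LaurentPolynomial.T_zero]
     simp [h],
   by
     rw [Matrix.diagonal_mul_diagonal]
     have h : ∀ i, LaurentPolynomial.T (R := k) (-a i) * LaurentPolynomial.T (a i) = 1 :=
       fun i => by rw [← LaurentPolynomial.T_add, neg_add_cancel, LaurentPolynomial.T_zero]
     simp [h]⟩

namespace BirkhoffAux

open Polynomial

variable {k : Type*} [Field k]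

lemma toLaurent_coeff_neg (p : k[X]) {n : ℤ} (hn : n < 0) : (Polynomial.toLaurent p).coeff n = 0 := by
  rw [LaurentPolynomial.coeff_toLaurent]
  apply Finsupp.mapDomain_notin_range
  rintro ⟨m, rfl⟩
  simp at hn
  omega

lemma toLaurent_coeff_nat (p : k[X]) (m : ℕ) : (Polynomial.toLaurent p).coeff (m : ℤ) = p.coeff m := by
  rw [LaurentPolynomial.coeff_toLaurent]
  exact Finsupp.mapDomain_apply Nat.castEmbedding.injective _ _

lemma toLaurent_monomial (m : ℕ) (c : k) :
    Polynomial.toLaurent (Polynomial.monomial m c) = AddMonoidAlgebra.single (m : ℤ) c := by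
  rw [Polynomial.toLaurent_C_mul_T, ← LaurentPolynomial.single_eq_C_mul_T]

lemma mem_polySubring_iff {f : LaurentPolynomial k} :
    f ∈ polySubring k ↔ ∀ n : ℤ, n < 0 → f.coeff n = 0 := by
  constructor
  · rintro ⟨p, rfl⟩ n hn
    exact toLaurent_coeff_neg p hn
  · intro h
    refine ⟨∑ n ∈ f.coeff.support, Polynomial.monomial n.toNat (f.coeff n), ?_⟩
    rw [map_sum]
    conv_rhs => rw [← AddMonoidAlgebra.sum_coeff_single f, Finsupp.sum]
    refine Finset.sum_congr rfl fun n hn => ?_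
    rw [toLaurent_monomial, Int.toNat_of_nonneg]
    by_contra hc
    exact Finsupp.mem_support_iff.mp hn (h n (by omega))

lemma invert_ringHom_apply (f : LaurentPolynomial k) :
    (LaurentPolynomial.invert (R := k)).toRingEquiv.toRingHom f = LaurentPolynomial.invert f := rfl

lemma mem_invPolySubring_iff {f : LaurentPolynomial k} :
    f ∈ invPolySubring k ↔ ∀ n : ℤ, 0 < n → f.coeff n = 0 := by
  constructor
  · rintro ⟨g, hg, rfl⟩ n hn
    rw [invert_ringHom_apply, LaurentPolynomial.invert_apply]
    exact mem_polySubring_iff.mp hg _ (by omega)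
  · intro h
    refine Subring.mem_map.mpr ⟨LaurentPolynomial.invert f, ?_, ?_⟩
    · rw [mem_polySubring_iff]
      intro n hn
      rw [LaurentPolynomial.invert_apply]
      exact h _ (by omega)
    · rw [invert_ringHom_apply]
      exact LaurentPolynomial.involutive_invert f

lemma eq_C_mul_X_pow_of_isUnit {p : k[X]} (h : IsUnit (Polynomial.toLaurent p)) :
    ∃ (c : k) (e : ℕ), c ≠ 0 ∧ p = Polynomial.C c * Polynomial.X ^ e := by
  obtain ⟨u, hu⟩ := h
  obtain ⟨m, q, hq⟩ := LaurentPolynomial.exists_T_pow (R := k) (↑u⁻¹ : LaurentPolynomial k)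
  have h2 : Polynomial.toLaurent (p * q) = Polynomial.toLaurent (Polynomial.X ^ m : k[X]) := by
    rw [map_mul, hq, Polynomial.toLaurent_X_pow, ← hu, ← mul_assoc, Units.mul_inv, one_mul]
  have hpq : p * q = Polynomial.X ^ m := Polynomial.toLaurent_injective h2
  obtain ⟨i, hi, hassoc⟩ := (dvd_prime_pow Polynomial.prime_X m).mp ⟨q, hpq.symm⟩
  obtain ⟨w, hw⟩ := hassoc.symm
  obtain ⟨c, hc, hcw⟩ := Polynomial.isUnit_iff.mp w.isUnit
  exact ⟨c, i, hc.ne_zero, by rw [← hw, ← hcw, mul_comm]⟩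



section GLpart

variable {N : ℕ}

lemma mem_entriesSubgroup {R : Type*} [CommRing R] {N : ℕ} {S : Subring R}
    {M : GL (Fin N) R} :
    M ∈ entriesSubgroup N S ↔ (∀ i j, (M : Matrix (Fin N) (Fin N) R) i j ∈ S) ∧
      (∀ i j, ((M⁻¹ : GL (Fin N) R) : Matrix (Fin N) (Fin N) R) i j ∈ S) := Iff.rfl

lemma det_isUnit (M : GL (Fin N) (LaurentPolynomial k)) :
    IsUnit ((M : Matrix (Fin N) (Fin N) (LaurentPolynomial k)).det) :=
  (Matrix.isUnit_iff_isUnit_det _).mp M.isUnit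

lemma exists_coeff_ne_zero_row (M : GL (Fin N) (LaurentPolynomial k)) (i : Fin N) :
    ∃ j n, ((M : Matrix (Fin N) (Fin N) (LaurentPolynomial k)) i j).coeff n ≠ 0 := by
  by_contra h
  push_neg at h
  have hrow : ∀ j, (M : Matrix (Fin N) (Fin N) (LaurentPolynomial k)) i j = 0 :=
    fun j => LaurentPolynomial.ext fun n => h j n
  exact (det_isUnit M).ne_zero (Matrix.det_eq_zero_of_row_eq_zero i hrow)

lemma mem_B_plus_of {M : GL (Fin N) (LaurentPolynomial k)}
    (h1 : ∀ i j, (M : Matrix (Fin N) (Fin N) (LaurentPolynomial k)) i j ∈ polySubring k)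
    (h2 : (Matrix.of fun i j =>
      ((M : Matrix (Fin N) (Fin N) (LaurentPolynomial k)) i j).coeff 0).det ≠ 0) :
    M ∈ entriesSubgroup N (polySubring k) := by
  choose P hP using h1
  set Pm : Matrix (Fin N) (Fin N) (Polynomial k) := Matrix.of P with hPm
  have hmap : Pm.map Polynomial.toLaurent = (M : Matrix (Fin N) (Fin N) (LaurentPolynomial k)) := by
    exact Matrix.ext fun i j => hP i j
  have hdet : Polynomial.toLaurent Pm.det
      = (M : Matrix (Fin N) (Fin N) (LaurentPolynomial k)).det := by
    rw [RingHom.map_det, RingHom.mapMatrix_apply, hmap]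
  have hunit : IsUnit (Polynomial.toLaurent Pm.det) := hdet ▸ det_isUnit M
  obtain ⟨c, e, hc, hce⟩ := eq_C_mul_X_pow_of_isUnit hunit
  have hcoe : (Matrix.of fun i j =>
      ((M : Matrix (Fin N) (Fin N) (LaurentPolynomial k)) i j).coeff 0)
      = Pm.map Polynomial.constantCoeff := by
    ext i j
    rw [Matrix.map_apply, Matrix.of_apply, ← hP i j]
    simpa [Polynomial.constantCoeff_apply, hPm] using toLaurent_coeff_nat (P i j) 0
  have he : e = 0 := by
    by_contra h0
    apply h2
    rw [hcoe, ← RingHom.mapMatrix_apply, ← RingHom.map_det, hce]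
    simp only [map_mul, Polynomial.constantCoeff_apply, Polynomial.coeff_C,
      Polynomial.coeff_X_pow, if_neg (Ne.symm h0)]
    simp
  have hPu : IsUnit Pm.det := by
    rw [hce, he, pow_zero, mul_one]
    exact Polynomial.isUnit_C.mpr (isUnit_iff_ne_zero.mpr hc)
  have h3 : Pm * Pm⁻¹ = 1 := Matrix.mul_nonsing_inv _ hPu
  have h4 : (M : Matrix (Fin N) (Fin N) (LaurentPolynomial k))
      * (Pm⁻¹).map Polynomial.toLaurent = 1 := by
    rw [← hmap, ← Matrix.map_mul, h3, Matrix.map_one _ (map_zero _) (map_one _)]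
  have h5 : ((M⁻¹ : GL (Fin N) (LaurentPolynomial k))
      : Matrix (Fin N) (Fin N) (LaurentPolynomial k)) = (Pm⁻¹).map Polynomial.toLaurent := by
    rw [Matrix.coe_units_inv]
    exact Matrix.inv_eq_right_inv h4
  refine ⟨fun i j => ⟨P i j, hP i j⟩, fun i j => ?_⟩
  rw [h5]
  exact ⟨Pm⁻¹ i j, rfl⟩

noncomputable def invertGL (k : Type*) [Field k] (N : ℕ) :
    GL (Fin N) (LaurentPolynomial k) →* GL (Fin N) (LaurentPolynomial k) :=
  Units.map (RingHom.toMonoidHom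
    (RingHom.mapMatrix ((LaurentPolynomial.invert (R := k)).toRingEquiv.toRingHom)))

lemma invertGL_entries (M : GL (Fin N) (LaurentPolynomial k)) (i j : Fin N) :
    ((invertGL k N M : GL (Fin N) (LaurentPolynomial k))
      : Matrix (Fin N) (Fin N) (LaurentPolynomial k)) i j
    = LaurentPolynomial.invert ((M : Matrix (Fin N) (Fin N) (LaurentPolynomial k)) i j) := rfl

lemma mem_B_minus_of {M : GL (Fin N) (LaurentPolynomial k)}
    (h1 : ∀ i j (n : ℤ), 0 < n →
      ((M : Matrix (Fin N) (Fin N) (LaurentPolynomial k)) i j).coeff n = 0)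
    (h2 : (Matrix.of fun i j =>
      ((M : Matrix (Fin N) (Fin N) (LaurentPolynomial k)) i j).coeff 0).det ≠ 0) :
    M ∈ entriesSubgroup N (invPolySubring k) := by
  have key : invertGL k N M ∈ entriesSubgroup N (polySubring k) := by
    apply mem_B_plus_of
    · intro i j
      rw [invertGL_entries, mem_polySubring_iff]
      intro n hn
      rw [LaurentPolynomial.invert_apply]
      exact h1 i j (-n) (by omega)
    · convert h2 using 2
      ext i j
      rw [Matrix.of_apply, Matrix.of_apply, invertGL_entries, LaurentPolynomial.invert_apply, neg_zero]
  obtain ⟨k1, k2⟩ := key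
  constructor
  · intro i j
    refine Subring.mem_map.mpr
      ⟨((invertGL k N M : GL (Fin N) (LaurentPolynomial k))
        : Matrix (Fin N) (Fin N) (LaurentPolynomial k)) i j, k1 i j, ?_⟩
    rw [invert_ringHom_apply, invertGL_entries]
    exact LaurentPolynomial.involutive_invert _
  · intro i j
    refine Subring.mem_map.mpr
      ⟨(((invertGL k N M)⁻¹ : GL (Fin N) (LaurentPolynomial k))
        : Matrix (Fin N) (Fin N) (LaurentPolynomial k)) i j, k2 i j, ?_⟩
    rw [invert_ringHom_apply, ← map_inv, invertGL_entries]
    exact LaurentPolynomial.involutive_invert _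

end GLpart



section Core

variable {k : Type*} [Field k] {N : ℕ}

lemma T_mul_coeff (m : ℤ) (f : LaurentPolynomial k) (n : ℤ) :
    (LaurentPolynomial.T (R := k) m * f).coeff n = f.coeff (n - m) := by
  show ((AddMonoidAlgebra.single m (1:k)) * f).coeff n = f.coeff (n - m)
  rw [AddMonoidAlgebra.coeff_single_mul_apply, one_mul]
  congr 1
  ring

lemma mul_T_coeff (m : ℤ) (f : LaurentPolynomial k) (n : ℤ) :
    (f * LaurentPolynomial.T (R := k) m).coeff n = f.coeff (n - m) := by
  show (f * (AddMonoidAlgebra.single m (1:k))).coeff n = f.coeff (n - m)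
  rw [AddMonoidAlgebra.coeff_mul_single_apply, mul_one, sub_eq_add_neg]

lemma core_caseA (M : GL (Fin N) (LaurentPolynomial k)) (β : Fin N → ℤ)
    (hub : ∀ i j (n : ℤ), β i < n →
      ((M : Matrix (Fin N) (Fin N) (LaurentPolynomial k)) i j).coeff n = 0)
    (hdet : (Matrix.of fun i j =>
      ((M : Matrix (Fin N) (Fin N) (LaurentPolynomial k)) i j).coeff (β i)).det ≠ 0) :
    ∃ Q ∈ entriesSubgroup N (invPolySubring k), M = diagT k N β * Q := by
  set Q : GL (Fin N) (LaurentPolynomial k) := (diagT k N β)⁻¹ * M with hQdef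
  have hQe : ∀ i j, (Q : Matrix (Fin N) (Fin N) (LaurentPolynomial k)) i j
      = LaurentPolynomial.T (-(β i)) * (M : Matrix (Fin N) (Fin N) (LaurentPolynomial k)) i j := by
    intro i j
    rw [hQdef, Units.val_mul,
      show (((diagT k N β)⁻¹ : GL (Fin N) (LaurentPolynomial k))
        : Matrix (Fin N) (Fin N) (LaurentPolynomial k))
        = Matrix.diagonal (fun i => LaurentPolynomial.T (-(β i))) from rfl,
      Matrix.diagonal_mul]
  have hmem : Q ∈ entriesSubgroup N (invPolySubring k) := by
    apply mem_B_minus_of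
    · intro i j n hn
      rw [hQe, T_mul_coeff]
      exact hub i j _ (by omega)
    · convert hdet using 2
      ext i j
      rw [Matrix.of_apply, Matrix.of_apply, hQe, T_mul_coeff]
      norm_num
  exact ⟨Q, hmem, by rw [hQdef, mul_inv_cancel_left]⟩

lemma core_caseB (M : GL (Fin N) (LaurentPolynomial k)) (c₀ : ℤ) (β : Fin N → ℤ)
    (hub : ∀ i j (n : ℤ), β i < n →
      ((M : Matrix (Fin N) (Fin N) (LaurentPolynomial k)) i j).coeff n = 0)
    (hlb : ∀ i j (n : ℤ), n < c₀ →
      ((M : Matrix (Fin N) (Fin N) (LaurentPolynomial k)) i j).coeff n = 0)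
    (hdet : (Matrix.of fun i j =>
      ((M : Matrix (Fin N) (Fin N) (LaurentPolynomial k)) i j).coeff (β i)).det = 0) :
    ∃ (Eg : GL (Fin N) (LaurentPolynomial k)) (i₀ : Fin N),
      Eg ∈ entriesSubgroup N (polySubring k) ∧ c₀ ≤ β i₀ - 1 ∧
      (∀ i j (n : ℤ), Function.update β i₀ (β i₀ - 1) i < n →
        ((((Eg * M : GL (Fin N) (LaurentPolynomial k)))
          : Matrix (Fin N) (Fin N) (LaurentPolynomial k)) i j).coeff n = 0) ∧
      (∀ i j (n : ℤ), n < c₀ →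
        ((((Eg * M : GL (Fin N) (LaurentPolynomial k)))
          : Matrix (Fin N) (Fin N) (LaurentPolynomial k)) i j).coeff n = 0) := by
  classical
  set Mv : Matrix (Fin N) (Fin N) (LaurentPolynomial k) :=
    (M : Matrix (Fin N) (Fin N) (LaurentPolynomial k)) with hMv
  set Λ : Matrix (Fin N) (Fin N) k := Matrix.of fun i j => (Mv i j).coeff (β i) with hΛ
  obtain ⟨v, hv0, hvM⟩ := Matrix.exists_vecMul_eq_zero_iff.mpr hdet
  have hvΛ : ∀ j, ∑ c, v c * Λ c j = 0 := by
    intro j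
    have := congrFun hvM j
    simpa [Matrix.vecMul, dotProduct] using this
  have hvex : ∃ i, v i ≠ 0 := by
    by_contra h
    push_neg at h
    exact hv0 (funext h)
  set s : Finset (Fin N) := Finset.univ.filter (fun i => v i ≠ 0) with hs
  have hsne : s.Nonempty := by
    obtain ⟨i, hi⟩ := hvex
    exact ⟨i, by simp [hs, hi]⟩
  obtain ⟨i₀, hi₀s, hmax⟩ := s.exists_max_image β hsne
  have hvi₀ : v i₀ ≠ 0 := (Finset.mem_filter.mp hi₀s).2
  set w : Fin N → k := fun i => v i * (v i₀)⁻¹ with hw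
  have hwi₀ : w i₀ = 1 := mul_inv_cancel₀ hvi₀
  have hwle : ∀ c, w c ≠ 0 → β c ≤ β i₀ := by
    intro c hc
    apply hmax
    refine Finset.mem_filter.mpr ⟨Finset.mem_univ c, fun h0 => hc ?_⟩
    simp [hw, h0]
  have hker : ∀ j, ∑ c, w c * (Mv c j).coeff (β c) = 0 := by
    intro j
    have h1 : ∑ c, w c * (Mv c j).coeff (β c) = (∑ c, v c * Λ c j) * (v i₀)⁻¹ := by
      rw [Finset.sum_mul]
      exact Finset.sum_congr rfl fun c _ => by rw [hΛ]; simp [hw, Matrix.of_apply]; ring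
    rw [h1, hvΛ, zero_mul]
  set e : Matrix (Fin N) (Fin N) (LaurentPolynomial k) :=
    Matrix.of fun i c => if i = i₀ ∧ c ≠ i₀ then AddMonoidAlgebra.single (β i₀ - β c) (w c) else 0
    with he
  have hee : e * e = 0 := by
    refine Matrix.ext fun i j => ?_
    rw [Matrix.mul_apply, Matrix.zero_apply]
    apply Finset.sum_eq_zero
    intro c _
    by_cases h1 : i = i₀ ∧ c ≠ i₀
    · have : ¬(c = i₀ ∧ j ≠ i₀) := fun hcon => h1.2 hcon.1
      simp [he, this]
    · simp [he, h1]
  have h1e : (1 + e) * (1 - e) = 1 := by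
    have : (1 + e) * (1 - e) = 1 - e * e := by noncomm_ring
    rw [this, hee, sub_zero]
  have h1e' : (1 - e) * (1 + e) = 1 := by
    have : (1 - e) * (1 + e) = 1 - e * e := by noncomm_ring
    rw [this, hee, sub_zero]
  set Eg : GL (Fin N) (LaurentPolynomial k) := ⟨1 + e, 1 - e, h1e, h1e'⟩ with hEg
  have hecoeff : ∀ i c (n : ℤ), n < 0 → (e i c).coeff n = 0 := by
    intro i c n hn
    by_cases h1 : i = i₀ ∧ c ≠ i₀
    · rw [he]
      simp only [Matrix.of_apply, if_pos h1, AddMonoidAlgebra.coeff_single, Finsupp.single_apply]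
      split_ifs with h2
      · by_contra hwc
        have := hwle c hwc
        omega
      · rfl
    · simp [he, h1]
  have hEmem : Eg ∈ entriesSubgroup N (polySubring k) := by
    constructor
    · intro i c
      show ((1 + e) : Matrix (Fin N) (Fin N) (LaurentPolynomial k)) i c ∈ polySubring k
      rw [Matrix.add_apply]
      refine Subring.add_mem _ ?_ ?_
      · by_cases h : i = c
        · subst h
          rw [Matrix.one_apply_eq]
          exact Subring.one_mem _
        · rw [Matrix.one_apply_ne h]
          exact Subring.zero_mem _
      · rw [mem_polySubring_iff]
        intro n hn
        exact hecoeff i c n hn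
    · intro i c
      show ((1 - e) : Matrix (Fin N) (Fin N) (LaurentPolynomial k)) i c ∈ polySubring k
      rw [Matrix.sub_apply]
      refine Subring.sub_mem _ ?_ ?_
      · by_cases h : i = c
        · subst h
          rw [Matrix.one_apply_eq]
          exact Subring.one_mem _
        · rw [Matrix.one_apply_ne h]
          exact Subring.zero_mem _
      · rw [mem_polySubring_iff]
        intro n hn
        exact hecoeff i c n hn
  have hMe : ∀ i j, i ≠ i₀ →
      ((Eg * M : GL (Fin N) (LaurentPolynomial k))
        : Matrix (Fin N) (Fin N) (LaurentPolynomial k)) i j = Mv i j := by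
    intro i j hne
    rw [Units.val_mul,
      show ((Eg : GL (Fin N) (LaurentPolynomial k))
        : Matrix (Fin N) (Fin N) (LaurentPolynomial k)) = 1 + e from rfl,
      Matrix.add_mul, Matrix.one_mul, Matrix.add_apply]
    have h0 : (e * Mv) i j = 0 := by
      rw [Matrix.mul_apply]
      apply Finset.sum_eq_zero
      intro c _
      have : ¬(i = i₀ ∧ c ≠ i₀) := fun hcon => hne hcon.1
      simp [he, this]
    rw [h0, add_zero]
  have hrow : ∀ j (n : ℤ),
      (((Eg * M : GL (Fin N) (LaurentPolynomial k))
        : Matrix (Fin N) (Fin N) (LaurentPolynomial k)) i₀ j).coeff n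
      = ∑ c, w c * (Mv c j).coeff (n - β i₀ + β c) := by
    intro j n
    have hL : ((e * Mv) i₀ j).coeff n
        = ∑ c ∈ Finset.univ.erase i₀, w c * (Mv c j).coeff (n - β i₀ + β c) := by
      rw [Matrix.mul_apply, AddMonoidAlgebra.coeff_sum, Finset.sum_apply', ← Finset.add_sum_erase _ _ (Finset.mem_univ i₀)]
      have h0 : ((e i₀ i₀ * Mv i₀ j) : LaurentPolynomial k).coeff n = 0 := by simp [he]
      rw [h0, zero_add]
      refine Finset.sum_congr rfl fun c hc => ?_
      have hc' : c ≠ i₀ := (Finset.mem_erase.mp hc).1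
      rw [show e i₀ c = AddMonoidAlgebra.single (β i₀ - β c) (w c) from by simp [he, hc'],
        AddMonoidAlgebra.coeff_single_mul_apply]
      congr 1
      ring
    rw [Units.val_mul,
      show ((Eg : GL (Fin N) (LaurentPolynomial k))
        : Matrix (Fin N) (Fin N) (LaurentPolynomial k)) = 1 + e from rfl,
      Matrix.add_mul, Matrix.one_mul, Matrix.add_apply, AddMonoidAlgebra.coeff_add, Finsupp.add_apply, hL,
      ← Finset.add_sum_erase _ (fun c => w c * (Mv c j).coeff (n - β i₀ + β c)) (Finset.mem_univ i₀),
      hwi₀, one_mul, show n - β i₀ + β i₀ = n by ring]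
  have hub' : ∀ i j (n : ℤ), Function.update β i₀ (β i₀ - 1) i < n →
      (((Eg * M : GL (Fin N) (LaurentPolynomial k))
        : Matrix (Fin N) (Fin N) (LaurentPolynomial k)) i j).coeff n = 0 := by
    intro i j n h
    by_cases hi : i = i₀
    · subst hi
      rw [Function.update_self] at h
      rw [hrow]
      by_cases hn : β i < n
      · apply Finset.sum_eq_zero
        intro c _
        by_cases hwc : w c = 0
        · rw [hwc, zero_mul]
        · rw [hub c j _ (by have := hwle c hwc; omega), mul_zero]
      · have hn' : n = β i := by omega
        subst hn'
        simp only [sub_self, zero_add]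
        exact hker j
    · rw [hMe i j hi]
      rw [Function.update_of_ne hi] at h
      exact hub i j n h
  have hlb' : ∀ i j (n : ℤ), n < c₀ →
      (((Eg * M : GL (Fin N) (LaurentPolynomial k))
        : Matrix (Fin N) (Fin N) (LaurentPolynomial k)) i j).coeff n = 0 := by
    intro i j n h
    by_cases hi : i = i₀
    · subst hi
      rw [hrow]
      apply Finset.sum_eq_zero
      intro c _
      by_cases hwc : w c = 0
      · rw [hwc, zero_mul]
      · rw [hlb c j _ (by have := hwle c hwc; omega), mul_zero]
    · rw [hMe i j hi]
      exact hlb i j n h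
  have hc₀le : c₀ ≤ β i₀ - 1 := by
    obtain ⟨j, n, hne⟩ := exists_coeff_ne_zero_row (Eg * M) i₀
    have h1 : ¬(Function.update β i₀ (β i₀ - 1) i₀ < n) := fun h => hne (hub' i₀ j n h)
    have h2 : ¬(n < c₀) := fun h => hne (hlb' i₀ j n h)
    rw [Function.update_self] at h1
    omega
  exact ⟨Eg, i₀, hEmem, hc₀le, hub', hlb'⟩

lemma birkhoff_core (μ : ℕ) :
    ∀ (M : GL (Fin N) (LaurentPolynomial k)) (c₀ : ℤ) (β : Fin N → ℤ),
    (∀ i j (n : ℤ), β i < n →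
      ((M : Matrix (Fin N) (Fin N) (LaurentPolynomial k)) i j).coeff n = 0) →
    (∀ i j (n : ℤ), n < c₀ →
      ((M : Matrix (Fin N) (Fin N) (LaurentPolynomial k)) i j).coeff n = 0) →
    (∑ i, (β i - c₀).toNat) ≤ μ →
    ∃ P ∈ entriesSubgroup N (polySubring k), ∃ a : Fin N → ℤ,
      ∃ Q ∈ entriesSubgroup N (invPolySubring k), M = P * diagT k N a * Q := by
  induction μ with
  | zero =>
    intro M c₀ β hub hlb hμ
    by_cases hdet : (Matrix.of fun i j =>
        ((M : Matrix (Fin N) (Fin N) (LaurentPolynomial k)) i j).coeff (β i)).det = 0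
    · obtain ⟨Eg, i₀, _, hc₀, _, _⟩ := core_caseB M c₀ β hub hlb hdet
      exfalso
      have h1 : (β i₀ - c₀).toNat ≤ ∑ i, (β i - c₀).toNat :=
        Finset.single_le_sum (f := fun i => (β i - c₀).toNat)
          (fun i _ => Nat.zero_le _) (Finset.mem_univ i₀)
      omega
    · obtain ⟨Q, hQ, hMQ⟩ := core_caseA M β hub hdet
      exact ⟨1, Subgroup.one_mem _, β, Q, hQ, by rw [one_mul]; exact hMQ⟩
  | succ μ ih =>
    intro M c₀ β hub hlb hμ
    by_cases hdet : (Matrix.of fun i j =>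
        ((M : Matrix (Fin N) (Fin N) (LaurentPolynomial k)) i j).coeff (β i)).det = 0
    · obtain ⟨Eg, i₀, hEmem, hc₀, hub', hlb'⟩ := core_caseB M c₀ β hub hlb hdet
      have hμ' : (∑ i, ((Function.update β i₀ (β i₀ - 1)) i - c₀).toNat) ≤ μ := by
        have e3 : ∑ i ∈ Finset.univ.erase i₀,
            ((Function.update β i₀ (β i₀ - 1)) i - c₀).toNat
            = ∑ i ∈ Finset.univ.erase i₀, (β i - c₀).toNat :=
          Finset.sum_congr rfl fun i hi => by
            rw [Function.update_of_ne (Finset.mem_erase.mp hi).1]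
        rw [← Finset.add_sum_erase _ _ (Finset.mem_univ i₀), e3, Function.update_self]
        rw [← Finset.add_sum_erase _ (fun i => (β i - c₀).toNat) (Finset.mem_univ i₀)] at hμ
        omega
      obtain ⟨P, hP, a, Q, hQ, hfac⟩ := ih (Eg * M) c₀ _ hub' hlb' hμ'
      refine ⟨Eg⁻¹ * P, Subgroup.mul_mem _ (Subgroup.inv_mem _ hEmem) hP, a, Q, hQ, ?_⟩
      calc M = Eg⁻¹ * (Eg * M) := (inv_mul_cancel_left _ _).symm
      _ = Eg⁻¹ * (P * diagT k N a * Q) := by rw [hfac]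
      _ = Eg⁻¹ * P * diagT k N a * Q := by group
    · obtain ⟨Q, hQ, hMQ⟩ := core_caseA M β hub hdet
      exact ⟨1, Subgroup.one_mem _, β, Q, hQ, by rw [one_mul]; exact hMQ⟩

lemma birkhoff_factorization (M : GL (Fin N) (LaurentPolynomial k)) :
    ∃ P ∈ entriesSubgroup N (polySubring k), ∃ a : Fin N → ℤ,
      ∃ Q ∈ entriesSubgroup N (invPolySubring k), M = P * diagT k N a * Q := by
  classical
  set S : Finset ℤ := Finset.univ.biUnion
    (fun p : Fin N × Fin N =>
      ((M : Matrix (Fin N) (Fin N) (LaurentPolynomial k)) p.1 p.2).coeff.support) with hS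
  have hmemS : ∀ i j (n : ℤ),
      ((M : Matrix (Fin N) (Fin N) (LaurentPolynomial k)) i j).coeff n ≠ 0 → n ∈ S := by
    intro i j n hn
    exact Finset.mem_biUnion.mpr ⟨(i, j), Finset.mem_univ _, Finsupp.mem_support_iff.mpr hn⟩
  by_cases hSne : S.Nonempty
  · refine birkhoff_core (∑ _i : Fin N, (S.max' hSne - S.min' hSne).toNat) M (S.min' hSne)
      (fun _ => S.max' hSne) ?_ ?_ le_rfl
    · intro i j n h
      by_contra hne
      have h2 := Finset.le_max' S n (hmemS i j n hne)
      have h3 : S.max' hSne < n := h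
      omega
    · intro i j n h
      by_contra hne
      have := Finset.min'_le S n (hmemS i j n hne)
      omega
  · have hall : ∀ i j (n : ℤ),
        ((M : Matrix (Fin N) (Fin N) (LaurentPolynomial k)) i j).coeff n = 0 := by
      intro i j n
      by_contra hne
      exact hSne ⟨n, hmemS i j n hne⟩
    refine birkhoff_core 0 M 0 (fun _ => 0) (fun i j n _ => hall i j n)
      (fun i j n _ => hall i j n) ?_
    simp

end Core



section Perm

variable {k : Type*} [Field k] {N : ℕ}

noncomputable def permGL (k : Type*) [Field k] (N : ℕ) (σ : Equiv.Perm (Fin N)) :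
    GL (Fin N) (LaurentPolynomial k) :=
  ⟨(σ.toPEquiv).toMatrix, (σ⁻¹.toPEquiv).toMatrix,
   by
     rw [← PEquiv.toMatrix_trans, ← Equiv.toPEquiv_trans,
       show σ.trans σ⁻¹ = Equiv.refl _ from Equiv.self_trans_symm σ,
       Equiv.toPEquiv_refl, PEquiv.toMatrix_refl],
   by
     rw [← PEquiv.toMatrix_trans, ← Equiv.toPEquiv_trans,
       show (σ⁻¹ : Equiv.Perm (Fin N)).trans σ = Equiv.refl _ from Equiv.symm_trans_self σ,
       Equiv.toPEquiv_refl, PEquiv.toMatrix_refl]⟩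

lemma permGL_mem (σ : Equiv.Perm (Fin N)) (S : Subring (LaurentPolynomial k)) :
    permGL k N σ ∈ entriesSubgroup N S := by
  constructor
  · intro i j
    rw [show ((permGL k N σ : GL (Fin N) (LaurentPolynomial k))
      : Matrix (Fin N) (Fin N) (LaurentPolynomial k)) = (σ.toPEquiv).toMatrix from rfl,
      PEquiv.toMatrix_apply]
    split_ifs
    · exact Subring.one_mem _
    · exact Subring.zero_mem _
  · intro i j
    rw [show (((permGL k N σ)⁻¹ : GL (Fin N) (LaurentPolynomial k))
      : Matrix (Fin N) (Fin N) (LaurentPolynomial k)) = (σ⁻¹.toPEquiv).toMatrix from rfl,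
      PEquiv.toMatrix_apply]
    split_ifs
    · exact Subring.one_mem _
    · exact Subring.zero_mem _

lemma perm_mul_diagT (σ : Equiv.Perm (Fin N)) (a : Fin N → ℤ) :
    (permGL k N σ * diagT k N a : GL (Fin N) (LaurentPolynomial k))
      = (diagT k N (a ∘ σ) * permGL k N σ : GL (Fin N) (LaurentPolynomial k)) := by
  apply Units.ext
  rw [Units.val_mul, Units.val_mul]
  show (σ.toPEquiv).toMatrix * Matrix.diagonal (fun i => LaurentPolynomial.T (a i))
      = Matrix.diagonal (fun i => LaurentPolynomial.T (a (σ i))) * (σ.toPEquiv).toMatrix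
  refine Matrix.ext fun i j => ?_
  rw [Matrix.diagonal_mul, PEquiv.toMatrix_toPEquiv_mul, Matrix.submatrix_apply, id_eq,
    show (σ.toPEquiv).toMatrix i j = (1 : Matrix (Fin N) (Fin N) (LaurentPolynomial k)) (σ i) j by
      simp [PEquiv.toMatrix_toPEquiv_apply, Matrix.one_apply, Pi.single_apply, eq_comm]]
  by_cases h : σ i = j
  · subst h
    rw [Matrix.diagonal_apply_eq, Matrix.one_apply_eq, mul_one]
  · rw [Matrix.diagonal_apply_ne _ h, Matrix.one_apply_ne h, mul_zero]

lemma diagT_conj_perm (σ : Equiv.Perm (Fin N)) (a : Fin N → ℤ) :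
    diagT k N (a ∘ σ) = permGL k N σ * diagT k N a * (permGL k N σ)⁻¹ := by
  rw [perm_mul_diagT, mul_inv_cancel_right]

end Perm

section Inj

variable {k : Type*} [Field k] {N : ℕ}

lemma card_le_of_zero_block {R : Type*} [CommRing R] {P : Matrix (Fin N) (Fin N) R}
    (hdet : P.det ≠ 0) {A B : Finset (Fin N)}
    (hz : ∀ i j, j ∈ A → i ∉ B → P i j = 0) : A.card ≤ B.card := by
  by_contra hlt
  push_neg at hlt
  apply hdet
  rw [Matrix.det_apply]
  apply Finset.sum_eq_zero
  intro σ _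
  have hex : ∃ j ∈ A, σ j ∉ B := by
    by_contra hall
    push_neg at hall
    have himg : A.image σ ⊆ B := fun x hx => by
      obtain ⟨j, hj, rfl⟩ := Finset.mem_image.mp hx
      exact hall j hj
    have h1 : A.card = (A.image σ).card := (Finset.card_image_of_injective _ σ.injective).symm
    have h2 : (A.image σ).card ≤ B.card := Finset.card_le_card himg
    omega
  obtain ⟨j, hjA, hjB⟩ := hex
  rw [show (∏ i, P (σ i) i) = 0 from Finset.prod_eq_zero (Finset.mem_univ j) (hz _ _ hjA hjB),
    smul_zero]

lemma antitone_le_of_card (a b : Fin N → ℤ) (ha : Antitone a) (hb : Antitone b)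
    (hc : ∀ c : ℤ, (Finset.univ.filter fun j => c ≤ a j).card
      ≤ (Finset.univ.filter fun j => c ≤ b j).card) :
    ∀ i, a i ≤ b i := by
  intro i
  by_contra hlt
  push_neg at hlt
  have h1 : (i : ℕ) + 1 ≤ (Finset.univ.filter fun j => a i ≤ a j).card := by
    have hsub : Finset.Iic i ⊆ Finset.univ.filter fun j => a i ≤ a j := fun j hj =>
      Finset.mem_filter.mpr ⟨Finset.mem_univ _, ha (Finset.mem_Iic.mp hj)⟩
    calc (i : ℕ) + 1 = (Finset.Iic i).card := (Fin.card_Iic i).symm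
    _ ≤ _ := Finset.card_le_card hsub
  have h2 : (Finset.univ.filter fun j => a i ≤ b j).card ≤ (i : ℕ) := by
    have hsub : (Finset.univ.filter fun j => a i ≤ b j) ⊆ Finset.Iio i := by
      intro j hj
      rw [Finset.mem_Iio]
      by_contra hge
      push_neg at hge
      have hb2 := hb hge
      have hb3 := (Finset.mem_filter.mp hj).2
      omega
    calc _ ≤ (Finset.Iio i).card := Finset.card_le_card hsub
    _ = (i : ℕ) := Fin.card_Iio i
  have h3 := hc (a i)
  omega

lemma entry_zero_of_doset_eq (P Q : GL (Fin N) (LaurentPolynomial k)) (a b : Fin N → ℤ)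
    (hQi : ∀ i j (n : ℤ), 0 < n →
      (((Q⁻¹ : GL (Fin N) (LaurentPolynomial k))
        : Matrix (Fin N) (Fin N) (LaurentPolynomial k)) i j).coeff n = 0)
    (hP : ∀ i j (n : ℤ), n < 0 →
      (((P : GL (Fin N) (LaurentPolynomial k))
        : Matrix (Fin N) (Fin N) (LaurentPolynomial k)) i j).coeff n = 0)
    (heq : diagT k N b = P * diagT k N a * Q) :
    ∀ i j, b i < a j →
      ((P : GL (Fin N) (LaurentPolynomial k))
        : Matrix (Fin N) (Fin N) (LaurentPolynomial k)) i j = 0 := by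
  intro i j hba
  have hPval : P = diagT k N b * Q⁻¹ * (diagT k N a)⁻¹ := by
    rw [heq]
    group
  have hPe : ((P : GL (Fin N) (LaurentPolynomial k))
      : Matrix (Fin N) (Fin N) (LaurentPolynomial k)) i j
      = LaurentPolynomial.T (b i)
        * (((Q⁻¹ : GL (Fin N) (LaurentPolynomial k))
          : Matrix (Fin N) (Fin N) (LaurentPolynomial k)) i j)
        * LaurentPolynomial.T (-(a j)) := by
    rw [hPval, Units.val_mul, Units.val_mul,
      show ((diagT k N b : GL (Fin N) (LaurentPolynomial k))
        : Matrix (Fin N) (Fin N) (LaurentPolynomial k))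
        = Matrix.diagonal (fun i => LaurentPolynomial.T (b i)) from rfl,
      show (((diagT k N a)⁻¹ : GL (Fin N) (LaurentPolynomial k))
        : Matrix (Fin N) (Fin N) (LaurentPolynomial k))
        = Matrix.diagonal (fun i => LaurentPolynomial.T (-(a i))) from rfl,
      Matrix.mul_diagonal, Matrix.diagonal_mul]
  refine LaurentPolynomial.ext fun n => ?_
  by_cases hn : n < 0
  · simp [hP i j n hn]
  · rw [hPe, mul_T_coeff, T_mul_coeff, hQi i j (n - -a j - b i) (by omega)]
    simp

end Inj



end BirkhoffAux

open BirkhoffAux in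
/-- **Classification of double cosets (Grothendieck's theorem, `GL_N` case).**
The map sending a weakly decreasing `a : Fin N → ℤ` to the double coset of
`diag(t^{a i})` in `GL_N(k[t]) \ GL_N(k[t,t⁻¹]) / GL_N(k[t⁻¹])` is a bijection. -/
theorem birkhoff_double_coset_bijection (k : Type*) [Field k] (N : ℕ) (hN : 1 ≤ N) :
    Function.Bijective
      (fun a : {a : Fin N → ℤ // Antitone a} =>
        DoubleCoset.mk (entriesSubgroup N (polySubring k)) (entriesSubgroup N (invPolySubring k))
          (diagT k N a.1)) := by

  constructor
  · intro a₁ a₂ h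
    obtain ⟨P, hP, Q, hQ, heq⟩ := (DoubleCoset.eq _ _ _ _).mp h
    have hPent : ∀ i j (n : ℤ), n < 0 →
        (((P : GL (Fin N) (LaurentPolynomial k))
          : Matrix (Fin N) (Fin N) (LaurentPolynomial k)) i j).coeff n = 0 :=
      fun i j n hn => mem_polySubring_iff.mp (hP.1 i j) n hn
    have hPinv : ∀ i j (n : ℤ), n < 0 →
        (((P⁻¹ : GL (Fin N) (LaurentPolynomial k))
          : Matrix (Fin N) (Fin N) (LaurentPolynomial k)) i j).coeff n = 0 :=
      fun i j n hn => mem_polySubring_iff.mp (hP.2 i j) n hn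
    have hQent : ∀ i j (n : ℤ), 0 < n →
        (((Q : GL (Fin N) (LaurentPolynomial k))
          : Matrix (Fin N) (Fin N) (LaurentPolynomial k)) i j).coeff n = 0 :=
      fun i j n hn => mem_invPolySubring_iff.mp (hQ.1 i j) n hn
    have hQinv : ∀ i j (n : ℤ), 0 < n →
        (((Q⁻¹ : GL (Fin N) (LaurentPolynomial k))
          : Matrix (Fin N) (Fin N) (LaurentPolynomial k)) i j).coeff n = 0 :=
      fun i j n hn => mem_invPolySubring_iff.mp (hQ.2 i j) n hn
    have E1 := entry_zero_of_doset_eq P Q a₁.1 a₂.1 hQinv hPent heq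
    have heq2 : diagT k N a₁.1 = P⁻¹ * diagT k N a₂.1 * Q⁻¹ := by
      rw [heq]
      group
    have E2 := entry_zero_of_doset_eq P⁻¹ Q⁻¹ a₂.1 a₁.1
      (fun i j n hn => by rw [inv_inv]; exact hQent i j n hn) hPinv heq2
    have hdetP : ((P : GL (Fin N) (LaurentPolynomial k))
        : Matrix (Fin N) (Fin N) (LaurentPolynomial k)).det ≠ 0 := (det_isUnit P).ne_zero
    have hdetPi : (((P⁻¹ : GL (Fin N) (LaurentPolynomial k)))
        : Matrix (Fin N) (Fin N) (LaurentPolynomial k)).det ≠ 0 := (det_isUnit P⁻¹).ne_zero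
    have hcard : ∀ c : ℤ, (Finset.univ.filter fun j => c ≤ a₁.1 j).card
        = (Finset.univ.filter fun j => c ≤ a₂.1 j).card := by
      intro c
      apply le_antisymm
      · apply card_le_of_zero_block hdetP
        intro i j hj hi
        apply E1
        have h1 := (Finset.mem_filter.mp hj).2
        simp only [Finset.mem_filter, Finset.mem_univ, true_and, not_le] at hi
        omega
      · apply card_le_of_zero_block hdetPi
        intro i j hj hi
        apply E2
        have h1 := (Finset.mem_filter.mp hj).2
        simp only [Finset.mem_filter, Finset.mem_univ, true_and, not_le] at hi
        omega
    have hle1 := antitone_le_of_card a₁.1 a₂.1 a₁.2 a₂.2 (fun c => (hcard c).le)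
    have hle2 := antitone_le_of_card a₂.1 a₁.1 a₂.2 a₁.2 (fun c => (hcard c).ge)
    exact Subtype.ext (funext fun i => le_antisymm (hle1 i) (hle2 i))
  · intro d
    obtain ⟨P, hP, a, Q, hQ, hm⟩ := birkhoff_factorization (k := k) (N := N) d.out
    have hanti : Antitone (a ∘ Tuple.sort (fun i => -(a i))) := by
      intro x y hxy
      have h2 := Tuple.monotone_sort (fun i => -(a i)) hxy
      simp only [Function.comp_apply] at h2 ⊢
      omega
    refine ⟨⟨a ∘ Tuple.sort (fun i => -(a i)), hanti⟩, ?_⟩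
    show DoubleCoset.mk (entriesSubgroup N (polySubring k)) (entriesSubgroup N (invPolySubring k))
      (diagT k N (a ∘ Tuple.sort (fun i => -(a i)))) = d
    have e1 : DoubleCoset.mk (entriesSubgroup N (polySubring k))
        (entriesSubgroup N (invPolySubring k)) (diagT k N a)
        = DoubleCoset.mk (entriesSubgroup N (polySubring k)) (entriesSubgroup N (invPolySubring k))
          (diagT k N (a ∘ Tuple.sort (fun i => -(a i)))) :=
      (DoubleCoset.eq _ _ _ _).mpr ⟨permGL k N _, permGL_mem _ _, (permGL k N _)⁻¹,
        Subgroup.inv_mem _ (permGL_mem _ _), diagT_conj_perm _ a⟩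
    have e2 : DoubleCoset.mk (entriesSubgroup N (polySubring k))
        (entriesSubgroup N (invPolySubring k)) (diagT k N a)
        = DoubleCoset.mk (entriesSubgroup N (polySubring k)) (entriesSubgroup N (invPolySubring k))
          d.out :=
      (DoubleCoset.eq _ _ _ _).mpr ⟨P, hP, Q, hQ, hm⟩
    rw [← e1, e2, DoubleCoset.out_eq']
end

section
/- Let k be a field, N ≥ 1, and f, g : Fin N → ℤ. Suppose M is a monomial matrix in GL_N(k) and M = L · U where L and U are invertible N×N matrices over k, L is block triangular with respect to f, and U is block triangular with respect to g. Then there exist monomial matrices L′, U′ in GL_N(k) with L′ block triangular with respect to f, U′ block triangular with respect to g, and M = L′ · U′. -/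
/-- A monomial matrix: an invertible matrix with exactly one nonzero entry in each row
and in each column. -/
def Matrix.IsMonomial {k : Type*} [Field k] {N : ℕ} (M : Matrix (Fin N) (Fin N) k) : Prop :=
  IsUnit M ∧ (∀ i, ∃! j, M i j ≠ 0) ∧ (∀ j, ∃! i, M i j ≠ 0)

namespace MonomialBruhatAux

variable {k : Type*} [Field k] {N : ℕ}

/-- A generalized permutation matrix. -/
def gp (e : Equiv.Perm (Fin N)) (d : Fin N → k) : Matrix (Fin N) (Fin N) k :=
  Matrix.of fun i j => if j = e i then d i else 0

lemma gp_mul_gp (e₁ e₂ : Equiv.Perm (Fin N)) (d₁ d₂ : Fin N → k) :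
    gp e₁ d₁ * gp e₂ d₂ = gp (e₁.trans e₂) fun i => d₁ i * d₂ (e₁ i) := by
  ext i j
  simp only [Matrix.mul_apply, gp, Matrix.of_apply]
  rw [Finset.sum_eq_single (e₁ i)]
  · simp [Equiv.trans_apply, mul_ite]
    exact if_congr Iff.rfl rfl rfl
  · intro x _ hx
    simp [hx]
  · simp

lemma gp_one : gp (Equiv.refl (Fin N)) (fun _ => (1 : k)) = 1 := by
  ext i j
  simp [gp, Matrix.one_apply, eq_comm]

lemma gp_isMonomial (e : Equiv.Perm (Fin N)) (d : Fin N → k) (hd : ∀ i, d i ≠ 0) :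
    (gp e d).IsMonomial := by
  refine ⟨?_, ?_, ?_⟩
  · have h : gp e d * gp e.symm (fun i => (d (e.symm i))⁻¹) = 1 := by
      rw [gp_mul_gp]
      have : (fun i => d i * (d (e.symm (e i)))⁻¹) = fun _ : Fin N => (1 : k) := by
        funext i; simp [mul_inv_cancel₀ (hd i)]
      rw [this]
      simpa using gp_one
    rw [Matrix.isUnit_iff_isUnit_det]
    exact IsUnit.of_mul_eq_one _ (by rw [← Matrix.det_mul, h, Matrix.det_one])
  · intro i
    refine ⟨e i, by simp [gp, hd i], fun j hj => ?_⟩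
    by_contra hne
    exact hj (by simp [gp, hne])
  · intro j
    refine ⟨e.symm j, by simp [gp, hd (e.symm j)], fun i hi => ?_⟩
    have : j = e i := by
      by_contra hne
      exact hi (by simp [gp, hne])
    rw [this, Equiv.symm_apply_apply]

lemma gp_blockTriangular (e : Equiv.Perm (Fin N)) (d : Fin N → k) (f : Fin N → ℤ)
    (hf : ∀ i, f (e i) = f i) : (gp e d).BlockTriangular f := by
  intro i j hij
  have : j ≠ e i := by
    rintro rfl
    rw [hf i] at hij
    exact lt_irrefl _ hij
  simp [gp, this]

lemma perm_fix_of_le (e : Equiv.Perm (Fin N)) (f : Fin N → ℤ) (h : ∀ i, f i ≤ f (e i)) :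
    ∀ i, f (e i) = f i := by
  have hs : ∑ i, f i = ∑ i, f (e i) := (Equiv.sum_comp e f).symm
  have := (Finset.sum_eq_sum_iff_of_le fun i _ => h i).mp hs
  intro i
  exact (this i (Finset.mem_univ i)).symm

end MonomialBruhatAux

open MonomialBruhatAux in
/-- **Bruhat-type factorization of monomial matrices.**  If a monomial matrix `M` factors
as `M = L * U` with `L`, `U` invertible and block triangular with respect to weight
functions `f` and `g` respectively, then `M = L' * U'` for monomial matrices `L'`, `U'`
block triangular with respect to `f` and `g` respectively. -/
theorem monomial_bruhat_factorization {k : Type*} [Field k] (N : ℕ) (hN : 1 ≤ N)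
    (f g : Fin N → ℤ) (M L U : Matrix (Fin N) (Fin N) k)
    (hM : M.IsMonomial) (hL : IsUnit L) (hU : IsUnit U)
    (hLf : L.BlockTriangular f) (hUg : U.BlockTriangular g) (hMLU : M = L * U) :
    ∃ L' U' : Matrix (Fin N) (Fin N) k,
      L'.IsMonomial ∧ U'.IsMonomial ∧
      L'.BlockTriangular f ∧ U'.BlockTriangular g ∧ M = L' * U' := by
  obtain ⟨hMu, hrow, hcol⟩ := hM
  -- the permutation underlying M
  set s : Fin N → Fin N := fun i => (hrow i).choose with hs
  have hsspec : ∀ i, M i (s i) ≠ 0 ∧ ∀ j, M i j ≠ 0 → j = s i := fun i => (hrow i).choose_spec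
  have hsinj : Function.Injective s := by
    intro i i' h
    obtain ⟨j, hj, hju⟩ := hcol (s i)
    rw [hju i (hsspec i).1, hju i' (h ▸ (hsspec i').1)]
  have hsbij : Function.Bijective s := (Finite.injective_iff_bijective).mp hsinj
  let σ : Equiv.Perm (Fin N) := Equiv.ofBijective s hsbij
  have hσ : ∀ i, σ i = s i := fun i => rfl
  set d : Fin N → k := fun i => M i (σ i) with hd
  have hdne : ∀ i, d i ≠ 0 := fun i => (hsspec i).1
  have hMzero : ∀ i j, j ≠ σ i → M i j = 0 := by
    intro i j hne
    by_contra h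
    exact hne ((hsspec i).2 j h)
  -- inverse of U
  have hUdet : IsUnit U.det := (Matrix.isUnit_iff_isUnit_det U).mp hU
  haveI := U.invertibleOfIsUnitDet hUdet
  set V : Matrix (Fin N) (Fin N) k := U⁻¹ with hV
  have hVtri : V.BlockTriangular g := Matrix.blockTriangular_inv_of_blockTriangular hUg
  have hLMV : L = M * V := by
    rw [hMLU, hV, Matrix.mul_nonsing_inv_cancel_right _ _ hUdet]
  have hLentry : ∀ i x, L i x = d i * V (σ i) x := by
    intro i x
    rw [hLMV, Matrix.mul_apply,
      Finset.sum_eq_single (σ i) (fun j _ hj => by rw [hMzero i j hj, zero_mul])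
        (fun h => absurd (Finset.mem_univ _) h)]
  have hVf : ∀ i x, V (σ i) x ≠ 0 → f i ≤ f x := by
    intro i x h
    by_contra hc
    have : L i x = 0 := hLf (lt_of_not_ge hc)
    rw [hLentry i x] at this
    rcases mul_eq_zero.mp this with h1 | h2
    · exact hdne i h1
    · exact h h2
  have hVdet : V.det ≠ 0 := by
    have h1 : U.det * V.det = 1 := by
      rw [← Matrix.det_mul, Matrix.mul_nonsing_inv _ hUdet, Matrix.det_one]
    intro h0
    rw [h0, mul_zero] at h1
    exact zero_ne_one h1
  -- find a permutation in the support of V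
  have hpi : ∃ π : Equiv.Perm (Fin N), ∀ y, V y (π y) ≠ 0 := by
    by_contra hcon
    push_neg at hcon
    apply hVdet
    rw [Matrix.det_apply]
    apply Finset.sum_eq_zero
    intro π _
    obtain ⟨y, hy⟩ := hcon π⁻¹
    have h0 : V (π (π⁻¹ y)) (π⁻¹ y) = 0 := by simpa using hy
    have hz : (∏ i, V (π i) i) = 0 := Finset.prod_eq_zero (Finset.mem_univ (π⁻¹ y)) h0
    rw [hz, smul_zero]
  obtain ⟨π, hπ⟩ := hpi
  have hgπle : ∀ y, g y ≤ g (π y) := by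
    intro y
    by_contra h
    exact hπ y (hVtri (lt_of_not_ge h))
  have hgπ : ∀ y, g (π y) = g y := perm_fix_of_le π g hgπle
  set τ : Equiv.Perm (Fin N) := σ.trans π with hτ
  have hfτle : ∀ i, f i ≤ f (τ i) := fun i => hVf i (π (σ i)) (hπ (σ i))
  have hfτ : ∀ i, f (τ i) = f i := perm_fix_of_le τ f hfτle
  set ρ : Equiv.Perm (Fin N) := π.symm with hρ
  have hgρ : ∀ x, g (ρ x) = g x := by
    intro x
    conv_rhs => rw [← Equiv.apply_symm_apply π x]
    exact (hgπ (π.symm x)).symm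
  refine ⟨gp τ d, gp ρ (fun _ => 1), gp_isMonomial τ d hdne,
    gp_isMonomial ρ _ (fun _ => one_ne_zero), gp_blockTriangular τ d f hfτ,
    gp_blockTriangular ρ _ g hgρ, ?_⟩
  rw [gp_mul_gp]
  have hτρ : τ.trans ρ = σ := by
    ext i
    simp [hτ, hρ, Equiv.trans_apply]
  rw [hτρ]
  ext i j
  by_cases hij : j = σ i
  · subst hij
    simp [gp]
    rfl
  · rw [hMzero i j hij]
    simp [gp, hij]
end

section
/- Let k be a field, N ≥ 1, Γ a group, and φ, ψ : Γ → GL_N(k) group homomorphisms such that φ(γ) and ψ(γ) are diagonal matrices for every γ ∈ Γ. If there exists g ∈ GL_N(k) with ψ(γ) = g · φ(γ) · g⁻¹ for all γ ∈ Γ, then there exists a permutation σ of Fin N such that for all γ ∈ Γ and all i, the (i,i) entry of ψ(γ) equals the (σ i, σ i) entry of φ(γ); equivalently, ψ(γ) = P_σ · φ(γ) · P_σ⁻¹ for the permutation matrix P_σ. -/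
open Matrix

private lemma card_fiber_le_aux {k : Type*} [Field k] {N : ℕ} {Γ : Type*}
    (M : Matrix (Fin N) (Fin N) k) (hM : IsUnit M) (F E : Fin N → Γ → k)
    (h : ∀ i j, M i j ≠ 0 → F i = E j) (c : Γ → k) :
    Nat.card {j // E j = c} ≤ Nat.card {i // F i = c} := by
  classical
  rw [Nat.card_eq_fintype_card, Nat.card_eq_fintype_card]
  have hinj : Function.Injective M.mulVec := mulVec_injective_iff_isUnit.2 hM
  set v : {j // E j = c} → ({i // F i = c} → k) := fun j i => M i.1 j.1 with hv
  have hli : LinearIndependent k v := by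
    rw [Fintype.linearIndependent_iff]
    intro d hd
    set D : Fin N → k := fun j => if hj : E j = c then d ⟨j, hj⟩ else 0 with hD
    have hMD : M.mulVec D = 0 := by
      funext i
      have split := Fintype.sum_subtype_add_sum_subtype (fun j => E j = c)
        (fun j => M i j * D j)
      simp only [mulVec, dotProduct, Pi.zero_apply, ← split]
      have h2 : ∑ j : {x // ¬ E x = c}, M i j.1 * D j.1 = 0 := by
        apply Finset.sum_eq_zero
        intro j _
        have : D j.1 = 0 := by simp [hD, j.2]
        simp [this]
      rw [h2, add_zero]
      by_cases hi : F i = c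
      · have hcoord := congrFun hd ⟨i, hi⟩
        simp only [Finset.sum_apply, Pi.smul_apply, smul_eq_mul, Pi.zero_apply, hv] at hcoord
        rw [← hcoord]
        apply Finset.sum_congr rfl
        intro j _
        simp [hD, j.2, mul_comm]
      · apply Finset.sum_eq_zero
        intro j _
        rcases eq_or_ne (M i j.1) 0 with h0 | h0
        · simp [h0]
        · exact absurd (h i j.1 h0 ▸ j.2) hi
    have hD0 : D = 0 := hinj (by simpa using hMD)
    intro j
    have := congrFun hD0 j.1
    simpa [hD, j.2] using this
  calc Fintype.card {j // E j = c}
      ≤ Module.finrank k ({i // F i = c} → k) := hli.fintype_card_le_finrank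
    _ = Fintype.card {i // F i = c} := Module.finrank_pi k

/-- **Conjugate diagonal representations are conjugate by a permutation matrix.**
If two homomorphisms `φ, ψ : Γ → GL_N(k)` landing in diagonal matrices are conjugate by
some `g ∈ GL_N(k)`, then they are conjugate by a permutation matrix: there is a
permutation `σ` with `(ψ γ) i i = (φ γ) (σ i) (σ i)` for all `γ, i`, equivalently
`ψ γ = P_σ * φ γ * P_σ⁻¹`. -/
theorem diagonal_conjugate_by_permutation (k : Type*) [Field k] (N : ℕ) (hN : 1 ≤ N)
    (Γ : Type*) [Group Γ] (φ ψ : Γ →* GL (Fin N) k)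
    (hφ : ∀ γ, ((φ γ : Matrix (Fin N) (Fin N) k)).IsDiag)
    (hψ : ∀ γ, ((ψ γ : Matrix (Fin N) (Fin N) k)).IsDiag)
    (hconj : ∃ g : GL (Fin N) k, ∀ γ, ψ γ = g * φ γ * g⁻¹) :
    ∃ σ : Equiv.Perm (Fin N),
      (∀ γ (i : Fin N),
        (ψ γ : Matrix (Fin N) (Fin N) k) i i = (φ γ : Matrix (Fin N) (Fin N) k) (σ i) (σ i)) ∧
      (∀ γ, (ψ γ : Matrix (Fin N) (Fin N) k) =
        σ.permMatrix k * (φ γ : Matrix (Fin N) (Fin N) k) * (σ⁻¹).permMatrix k) := by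
  classical
  obtain ⟨g, hg⟩ := hconj
  set G : Matrix (Fin N) (Fin N) k := (g : Matrix (Fin N) (Fin N) k) with hG
  set G' : Matrix (Fin N) (Fin N) k := ((g⁻¹ : GL (Fin N) k) : Matrix (Fin N) (Fin N) k) with hG'
  set F : Fin N → Γ → k := fun i γ => (ψ γ : Matrix (Fin N) (Fin N) k) i i with hF
  set E : Fin N → Γ → k := fun j γ => (φ γ : Matrix (Fin N) (Fin N) k) j j with hE
  -- commutation relations as matrices
  have hcomm : ∀ γ, (ψ γ : Matrix (Fin N) (Fin N) k) * G = G * (φ γ : Matrix (Fin N) (Fin N) k) := by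
    intro γ
    have h1 : ψ γ * g = g * φ γ := by rw [hg γ]; group
    exact congrArg Units.val h1
  have hcomm' : ∀ γ,
      (φ γ : Matrix (Fin N) (Fin N) k) * G' = G' * (ψ γ : Matrix (Fin N) (Fin N) k) := by
    intro γ
    have h1 : φ γ * g⁻¹ = g⁻¹ * ψ γ := by rw [hg γ]; group
    exact congrArg Units.val h1
  -- entrywise relation
  have key : ∀ (A B M : Matrix (Fin N) (Fin N) k), A.IsDiag → B.IsDiag →
      A * M = M * B → ∀ i j, M i j ≠ 0 → A i i = B j j := by
    intro A B M hA hB hAB i j hij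
    have h1 : (A * M) i j = A i i * M i j := by
      rw [Matrix.mul_apply]
      rw [Finset.sum_eq_single i]
      · intro b _ hb
        rw [hA (Ne.symm hb), zero_mul]
      · simp
    have h2 : (M * B) i j = M i j * B j j := by
      rw [Matrix.mul_apply]
      rw [Finset.sum_eq_single j]
      · intro b _ hb
        rw [hB hb, mul_zero]
      · simp
    have heq : A i i * M i j = M i j * B j j := by
      rw [← h1, ← h2, hAB]
    exact mul_right_cancel₀ hij (by rw [heq, mul_comm])
  have hrel : ∀ i j, G i j ≠ 0 → F i = E j := by
    intro i j hij
    funext γ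
    exact key _ _ _ (hψ γ) (hφ γ) (hcomm γ) i j hij
  have hrel' : ∀ j i, G' j i ≠ 0 → E j = F i := by
    intro j i hij
    funext γ
    exact key _ _ _ (hφ γ) (hψ γ) (hcomm' γ) j i hij
  have hGu : IsUnit G := ⟨g, rfl⟩
  have hGu' : IsUnit G' := ⟨g⁻¹, rfl⟩
  have hcard : ∀ c : Γ → k, Nat.card {i // F i = c} = Nat.card {j // E j = c} := by
    intro c
    exact le_antisymm (card_fiber_le_aux G' hGu' E F hrel' c)
      (card_fiber_le_aux G hGu F E hrel c)
  have hequiv : ∀ c : Γ → k, Nonempty ({i // F i = c} ≃ {j // E j = c}) := by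
    intro c
    exact Finite.card_eq.mp (hcard c)
  let σ : Equiv.Perm (Fin N) := Equiv.ofFiberEquiv (f := F) (g := E) fun c => (hequiv c).some
  have hσ : ∀ i, E (σ i) = F i := fun i =>
    Equiv.ofFiberEquiv_map (fun c => (hequiv c).some) i
  refine ⟨σ, fun γ i => (congrFun (hσ i) γ).symm, fun γ => ?_⟩
  have hPM : σ.permMatrix k * (φ γ : Matrix (Fin N) (Fin N) k) * (σ⁻¹).permMatrix k =
      ((φ γ : Matrix (Fin N) (Fin N) k)).submatrix σ σ := by
    rw [PEquiv.toMatrix_toPEquiv_mul, PEquiv.mul_toMatrix_toPEquiv]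
    ext i j
    simp [Matrix.submatrix_apply, Equiv.Perm.inv_def]
  rw [hPM]
  ext i j
  rcases eq_or_ne i j with rfl | hij
  · exact (congrFun (hσ i) γ).symm
  · rw [hψ γ hij, Matrix.submatrix_apply, hφ γ (fun h => hij (σ.injective h))]
end

section
/- Let k be a field, n ≥ 1, and d : Fin n → ℤ. Call a tuple of polynomials f : Fin n → k[X] admissible for d if: (i) for every i, if d i < 0 then f i = 0, and if d i ≥ 0 then the degree of f i is at most d i; and (ii) for every i with i+1 < n, the constant coefficient of f (i+1) equals the coefficient of X^{(d i).toNat} in f i. Then there exists an admissible tuple f with nonzero constant coefficient of f 0 if and only if d ≥ 0 in the lexicographic order on Fin n → ℤ (i.e., d = 0 or the first nonzero value d i is positive). -/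
open Polynomial

/-- A tuple of polynomials `f : Fin n → k[X]` is admissible for a multidegree
`d : Fin n → ℤ` if each `f i` vanishes when `d i < 0` and has degree at most `d i` when
`d i ≥ 0`, and consecutive entries match at the nodes: the constant coefficient of
`f (i+1)` equals the coefficient of `X^{(d i).toNat}` in `f i`. -/
def Admissible {k : Type*} [Field k] {n : ℕ} (d : Fin n → ℤ) (f : Fin n → k[X]) : Prop :=
  (∀ i, (d i < 0 → f i = 0) ∧ (0 ≤ d i → (f i).degree ≤ ((d i).toNat : ℕ))) ∧
  (∀ (i : ℕ) (h : i + 1 < n),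
    (f ⟨i + 1, h⟩).coeff 0 = (f ⟨i, Nat.lt_of_succ_lt h⟩).coeff ((d ⟨i, Nat.lt_of_succ_lt h⟩).toNat))

/-- **Sections of `O(d)` on a chain of projective lines nonvanishing at `p₊`.**
There is an admissible tuple `f` for `d` whose first polynomial has nonzero constant
coefficient if and only if `d ≥ 0` in the lexicographic order, i.e. `d = 0` or the first
nonzero value of `d` is positive. -/
theorem chain_section_nonvanishing_iff_lex_nonneg {k : Type*} [Field k] (n : ℕ) (hn : 1 ≤ n)
    (d : Fin n → ℤ) :
    (∃ f : Fin n → k[X], Admissible d f ∧ (f ⟨0, hn⟩).coeff 0 ≠ 0) ↔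
      (d = 0 ∨ ∃ i : Fin n, (∀ j, j < i → d j = 0) ∧ 0 < d i) := by
  constructor
  · rintro ⟨f, ⟨hdeg, hnode⟩, h0⟩
    by_contra hcon
    push_neg at hcon
    obtain ⟨hne, hlex⟩ := hcon
    classical
    -- key: if d vanishes below m, constant coeff propagates
    have key : ∀ m (h : m < n), (∀ j : Fin n, (j : ℕ) < m → d j = 0) →
        (f ⟨m, h⟩).coeff 0 = (f ⟨0, hn⟩).coeff 0 := by
      intro m
      induction m with
      | zero => intro h _; rfl
      | succ m ih =>
        intro h hz
        have hm : m < n := Nat.lt_of_succ_lt h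
        have hdm : d ⟨m, hm⟩ = 0 := hz ⟨m, hm⟩ (Nat.lt_succ_self m)
        have := hnode m h
        rw [hdm] at this
        simp only [Int.toNat_zero] at this
        rw [this]
        exact ih hm (fun j hj => hz j (Nat.lt_succ_of_lt hj))
    -- there exists an index where d is nonzero
    have hex : ∃ m : ℕ, ∃ h : m < n, d ⟨m, h⟩ ≠ 0 := by
      by_contra hc
      push_neg at hc
      apply hne
      funext j
      exact hc j j.2
    let m := Nat.find hex
    obtain ⟨hmn, hdm⟩ := Nat.find_spec hex
    have hzero : ∀ j : Fin n, (j : ℕ) < m → d j = 0 := by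
      intro j hj
      by_contra hdj
      exact absurd (Nat.find_le (h := hex) ⟨j.2, by simpa using hdj⟩) (Nat.not_le.mpr hj)
    have hneg : d ⟨m, hmn⟩ < 0 :=
      lt_of_le_of_ne (hlex ⟨m, hmn⟩ hzero) hdm
    have hf0 : f ⟨m, hmn⟩ = 0 := (hdeg ⟨m, hmn⟩).1 hneg
    have := key m hmn hzero
    rw [hf0] at this
    simp at this
    exact h0 this.symm
  · rintro (rfl | ⟨i, hz, hpos⟩)
    · refine ⟨fun _ => 1, ⟨fun j => ⟨fun h => absurd h (by simp), fun _ => by simp⟩,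
        fun j h => by simp⟩, by simp⟩
    · classical
      refine ⟨fun j => if j ≤ i then 1 else 0, ⟨?_, ?_⟩, ?_⟩
      · intro j
        constructor
        · intro hneg
          have : ¬ j ≤ i := by
            intro hji
            rcases lt_or_eq_of_le hji with h | h
            · rw [hz j h] at hneg; exact absurd hneg (by simp)
            · rw [h] at hneg; exact absurd hpos (not_lt.mpr hneg.le)
          simp [this]
        · intro hge
          by_cases hji : j ≤ i
          · simp [hji]
          · simp [hji]
      · intro j h
        by_cases h1 : (⟨j + 1, h⟩ : Fin n) ≤ i
        · have hj : (⟨j, Nat.lt_of_succ_lt h⟩ : Fin n) < i := by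
            simp only [Fin.le_def] at h1
            exact Fin.lt_def.mpr (Nat.lt_of_succ_le h1)
          have hd0 : d ⟨j, Nat.lt_of_succ_lt h⟩ = 0 := hz _ hj
          simp [h1, le_of_lt hj, hd0]
        · simp only [h1, if_neg]
          by_cases hj : (⟨j, Nat.lt_of_succ_lt h⟩ : Fin n) ≤ i
          · have hji : (⟨j, Nat.lt_of_succ_lt h⟩ : Fin n) = i := by
              rcases lt_or_eq_of_le hj with hlt | heq
              · exfalso
                apply h1
                simp only [Fin.le_def]
                exact Nat.succ_le_of_lt (Fin.lt_def.mp hlt)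
              · exact heq
            have h1' : (d ⟨j, Nat.lt_of_succ_lt h⟩).toNat ≠ 0 := by
              rw [hji]
              omega
            simp [hj, coeff_one, h1']
          · simp [hj]
      · have : (⟨0, hn⟩ : Fin n) ≤ i := by simp [Fin.le_def]
        simp [this]
end

section
/- Let n ≥ 1 and let Φ be a finite set of functions Fin n → ℤ. Then there exist rational numbers x_0 > x_1 > ⋯ > x_{n−1} > 0 such that for every α ∈ Φ: (a) α ≥ 0 in the lexicographic order on Fin n → ℤ if and only if Σ_i x_i · α(i) ≥ 0; and (b) Σ_i x_i · α(i) = 0 if and only if α = 0. -/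
lemma geom_bound (M : ℤ) (hM : 2 ≤ M) :
    ∀ (m : ℕ) (β : Fin m → ℤ), (∀ j, |β j| ≤ M - 1) →
      |∑ j : Fin m, M ^ (m - 1 - j.val) * β j| ≤ M ^ m - 1 := by
  intro m
  induction m with
  | zero => intro β _; simp
  | succ m ih =>
    intro β hβ
    rw [Fin.sum_univ_succ]
    have h1 : ∀ j : Fin m, (m + 1 - 1 - (j.succ : Fin (m+1)).val) = m - 1 - j.val := by
      intro j; simp [Fin.val_succ]; omega
    have h2 : (m + 1 - 1 - (0 : Fin (m+1)).val) = m := by simp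
    have htail := ih (fun j => β j.succ) (fun j => hβ j.succ)
    have hMpos : (0:ℤ) < M ^ m := by positivity
    calc |M ^ (m + 1 - 1 - (0 : Fin (m+1)).val) * β 0 +
            ∑ j : Fin m, M ^ (m + 1 - 1 - (j.succ : Fin (m+1)).val) * β j.succ|
        ≤ |M ^ (m + 1 - 1 - (0 : Fin (m+1)).val) * β 0| +
            |∑ j : Fin m, M ^ (m + 1 - 1 - (j.succ : Fin (m+1)).val) * β j.succ| :=
          abs_add_le _ _
      _ ≤ M ^ m * (M - 1) + (M ^ m - 1) := by
          gcongr ?_ + ?_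
          · rw [h2, abs_mul, abs_of_nonneg hMpos.le]
            exact mul_le_mul_of_nonneg_left (hβ 0) hMpos.le
          · simp only [h1]; exact htail
      _ = M ^ (m + 1) - 1 := by ring


lemma geom_pos (M : ℤ) (hM : 2 ≤ M) :
    ∀ (m : ℕ) (α : Fin m → ℤ), (∀ j, |α j| ≤ M - 1) →
      ∀ i : Fin m, (∀ j, j < i → α j = 0) → 0 < α i →
        0 < ∑ j : Fin m, M ^ (m - 1 - j.val) * α j := by
  intro m
  induction m with
  | zero => intro α _ i; exact i.elim0
  | succ m ih =>
    intro α hα i hzero hi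
    rw [Fin.sum_univ_succ]
    have h1 : ∀ j : Fin m, (m + 1 - 1 - (j.succ : Fin (m+1)).val) = m - 1 - j.val := by
      intro j; simp [Fin.val_succ]; omega
    simp only [h1]
    rcases Fin.eq_zero_or_eq_succ i with rfl | ⟨k, rfl⟩
    · have htail := geom_bound M hM m (fun j => α j.succ) (fun j => hα j.succ)
      have h2 : (m + 1 - 1 - (0 : Fin (m+1)).val) = m := by simp
      rw [h2]
      have hMpos : (0:ℤ) < M ^ m := by positivity
      have h3 : M ^ m ≤ M ^ m * α 0 := by nlinarith
      have h4 : -(M ^ m - 1) ≤ ∑ j : Fin m, M ^ (m - 1 - j.val) * α j.succ :=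
        (abs_le.mp htail).1
      linarith
    · have hα0 : α 0 = 0 := hzero 0 (Fin.succ_pos k)
      rw [hα0, mul_zero, zero_add]
      refine ih (fun j => α j.succ) (fun j => hα j.succ) k ?_ hi
      intro j hj
      exact hzero j.succ (by exact_mod_cast Fin.succ_lt_succ_iff.mpr hj)

/-- **Choosing weights `x₀ > x₁ > ⋯ > x_{n-1} > 0` detecting lexicographic positivity.**
For any finite set `Φ` of functions `Fin n → ℤ` there are positive rationals
`x 0 > x 1 > ⋯ > x (n-1) > 0` such that for every `α ∈ Φ`, `α` is lexicographically
nonnegative iff `∑ i, x i * α i ≥ 0`, and `∑ i, x i * α i = 0` iff `α = 0`. -/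
theorem exists_weights_detecting_lex (n : ℕ) (hn : 1 ≤ n) (Φ : Finset (Fin n → ℤ)) :
    ∃ x : Fin n → ℚ, StrictAnti x ∧ (∀ i, 0 < x i) ∧
      ∀ α ∈ Φ,
        ((α = 0 ∨ ∃ i : Fin n, (∀ j, j < i → α j = 0) ∧ 0 < α i) ↔
          0 ≤ ∑ i, x i * (α i : ℚ)) ∧
        ((∑ i, x i * (α i : ℚ)) = 0 ↔ α = 0) := by
  obtain ⟨M, hM, hbound⟩ : ∃ M : ℤ, 2 ≤ M ∧ ∀ α ∈ Φ, ∀ j, |α j| ≤ M - 1 := by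
    refine ⟨((Φ.sup (fun α => Finset.univ.sup fun i => (α i).natAbs) : ℕ) : ℤ) + 2, le_add_of_nonneg_left (Int.natCast_nonneg _), ?_⟩
    intro α hα j
    have h1 : (α j).natAbs ≤ Φ.sup (fun α => Finset.univ.sup fun i => (α i).natAbs) :=
      le_trans (Finset.le_sup (f := fun i => (α i).natAbs) (Finset.mem_univ j))
        (Finset.le_sup (f := fun α => Finset.univ.sup fun i => (α i).natAbs) hα)
    rw [Int.abs_eq_natAbs]
    have h2 : (((α j).natAbs : ℕ) : ℤ) ≤ ((Φ.sup (fun α => Finset.univ.sup fun i => (α i).natAbs) : ℕ) : ℤ) := by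
      exact_mod_cast h1
    linarith
  refine ⟨fun i => (M : ℚ) ^ (n - 1 - i.val), ?_, ?_, ?_⟩
  · intro i j hij
    have hMQ : (1:ℚ) < (M:ℚ) := by exact_mod_cast (by omega : (1:ℤ) < M)
    apply pow_lt_pow_right₀ hMQ
    have := j.isLt
    omega
  · intro i
    have hMQ : (0:ℚ) < (M:ℚ) := by exact_mod_cast (by omega : (0:ℤ) < M)
    positivity
  · intro α hα
    obtain ⟨S, hS⟩ : ∃ S : ℤ, S = ∑ j : Fin n, M ^ (n - 1 - j.val) * α j := ⟨_, rfl⟩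
    have hcast : ∑ i : Fin n, (M:ℚ) ^ (n - 1 - i.val) * (α i : ℚ) = (S : ℚ) := by
      rw [hS]; push_cast; ring
    -- trichotomy
    have hzeroS : α = 0 → S = 0 := by
      intro h; rw [hS, h]; simp
    have hposS : ∀ i : Fin n, (∀ j, j < i → α j = 0) → 0 < α i → 0 < S := by
      intro i h1 h2; rw [hS]; exact geom_pos M hM n α (hbound α hα) i h1 h2
    have hnegS : ∀ i : Fin n, (∀ j, j < i → α j = 0) → α i < 0 → S < 0 := by
      intro i h1 h2
      have := geom_pos M hM n (-α) (fun j => by rw [Pi.neg_apply, abs_neg]; exact hbound α hα j)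
        i (fun j hj => by simp [h1 j hj]) (by simpa using h2)
      have hsum : ∑ j : Fin n, M ^ (n - 1 - j.val) * (-α) j = -S := by
        rw [hS, ← Finset.sum_neg_distrib]
        exact Finset.sum_congr rfl fun j _ => by rw [Pi.neg_apply]; ring
      rw [hsum] at this
      omega
    constructor
    · rw [hcast]
      constructor
      · rintro (rfl | ⟨i, h1, h2⟩)
        · rw [hzeroS rfl]; norm_num
        · exact_mod_cast (hposS i h1 h2).le
      · intro hSnn
        by_cases h0 : α = 0
        · exact Or.inl h0
        · right
          have hne : (Finset.univ.filter fun i => α i ≠ 0).Nonempty := by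
            rcases Function.ne_iff.mp h0 with ⟨i, hi⟩
            exact ⟨i, by simpa using hi⟩
          set i := (Finset.univ.filter fun i => α i ≠ 0).min' hne with hi
          have himem := (Finset.univ.filter fun i => α i ≠ 0).min'_mem hne
          have hine : α i ≠ 0 := by simpa using himem
          have hfirst : ∀ j, j < i → α j = 0 := by
            intro j hj
            by_contra hjne
            exact absurd (Finset.min'_le _ j (by simp [hjne])) (not_le.mpr hj)
          rcases hine.lt_or_gt with hlt | hgt
          · exact absurd ((hnegS i hfirst hlt)) (by exact_mod_cast hSnn.not_gt)
          · exact ⟨i, hfirst, hgt⟩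
    · rw [hcast]
      constructor
      · intro hS0
        by_contra h0
        have hne : (Finset.univ.filter fun i => α i ≠ 0).Nonempty := by
          rcases Function.ne_iff.mp h0 with ⟨i, hi⟩
          exact ⟨i, by simpa using hi⟩
        set i := (Finset.univ.filter fun i => α i ≠ 0).min' hne with hi
        have himem := (Finset.univ.filter fun i => α i ≠ 0).min'_mem hne
        have hine : α i ≠ 0 := by simpa using himem
        have hfirst : ∀ j, j < i → α j = 0 := by
          intro j hj
          by_contra hjne
          exact absurd (Finset.min'_le _ j (by simp [hjne])) (not_le.mpr hj)
        have hS0' : S = 0 := by exact_mod_cast hS0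
        rcases hine.lt_or_gt with hlt | hgt
        · exact absurd (hnegS i hfirst hlt) (by omega)
        · exact absurd (hposS i hfirst hgt) (by omega)
      · intro h; rw [hzeroS h]; norm_num
end

section
/- Let a and b be positive integers, let Q = ℤ²/⟨(a,−b)⟩ be the quotient of ℤ² by the subgroup generated by (a,−b), and let q : Q → ℤ/aℤ × ℤ/bℤ be the homomorphism induced by coordinatewise reduction (x,y) ↦ (x mod a, y mod b) (this is well defined since (a,−b) maps to 0). Then q is injective on the torsion subgroup of Q: if x ∈ Q satisfies m • x = 0 for some nonzero integer m and q(x) = 0, then x = 0. -/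
/-- The quotient `Q = ℤ²/⟨(a,−b)⟩`, the Picard group of the football `P¹_{a,b}`. -/
abbrev footballPic (a b : ℕ) : Type :=
  (ℤ × ℤ) ⧸ AddSubgroup.zmultiples ((a : ℤ), -(b : ℤ))

/-- The homomorphism `q : ℤ²/⟨(a,−b)⟩ → ℤ/aℤ × ℤ/bℤ` induced by coordinatewise
reduction `(x, y) ↦ (x mod a, y mod b)`. -/
noncomputable def footballRes (a b : ℕ) : footballPic a b →+ ZMod a × ZMod b :=
  QuotientAddGroup.lift _ ((Int.castAddHom (ZMod a)).prodMap (Int.castAddHom (ZMod b)))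
    (by
      intro x hx
      obtain ⟨m, rfl⟩ := AddSubgroup.mem_zmultiples_iff.mp hx
      suffices h : ((Int.castAddHom (ZMod a)).prodMap (Int.castAddHom (ZMod b)))
          ((a : ℤ), -(b : ℤ)) = 0 by
        rw [AddMonoidHom.mem_ker, map_zsmul, h, smul_zero]
      simp [Prod.ext_iff])

/-- **Restriction to the orbifold points is injective on torsion.**
If `x ∈ ℤ²/⟨(a,−b)⟩` is a torsion element mapping to `0` in `ℤ/aℤ × ℤ/bℤ`, then `x = 0`. -/
theorem footballRes_injective_on_torsion (a b : ℕ) (ha : 0 < a) (hb : 0 < b)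
    (x : footballPic a b) (htor : ∃ m : ℤ, m ≠ 0 ∧ m • x = 0)
    (hx : footballRes a b x = 0) : x = 0 := by
  obtain ⟨⟨u, v⟩, rfl⟩ := QuotientAddGroup.mk_surjective x
  obtain ⟨m, hm, htor⟩ := htor
  -- divisibility from hx
  have hx' : ((u : ZMod a), (v : ZMod b)) = (0 : ZMod a × ZMod b) := by
    simpa [footballRes, QuotientAddGroup.lift_mk] using hx
  obtain ⟨hu, hv⟩ := Prod.mk.injEq .. ▸ hx'
  obtain ⟨u', hu'⟩ := (ZMod.intCast_zmod_eq_zero_iff_dvd u a).mp hu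
  obtain ⟨v', hv'⟩ := (ZMod.intCast_zmod_eq_zero_iff_dvd v b).mp hv
  -- torsion condition
  rw [← QuotientAddGroup.mk_zsmul, QuotientAddGroup.eq_zero_iff] at htor
  obtain ⟨k, hk⟩ := AddSubgroup.mem_zmultiples_iff.mp htor
  have hk1 : k * a = m * u := congrArg Prod.fst hk
  have hk2 : k * (-b) = m * v := congrArg Prod.snd hk
  have ha' : (a : ℤ) ≠ 0 := by exact_mod_cast ha.ne'
  have hb' : (b : ℤ) ≠ 0 := by exact_mod_cast hb.ne'
  have hku : k = m * u' := by
    have : k * a = m * u' * a := by rw [hk1, hu']; ring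
    exact mul_right_cancel₀ ha' this
  have hkv : k = -(m * v') := by
    have : k * b = -(m * v') * b := by
      have := hk2
      rw [hv'] at this
      nlinarith [this]
    exact mul_right_cancel₀ hb' this
  have huv : u' = -v' := by
    have : m * u' = m * (-v') := by rw [← hku, hkv]; ring
    exact mul_left_cancel₀ hm this
  rw [QuotientAddGroup.eq_zero_iff]
  refine AddSubgroup.mem_zmultiples_iff.mpr ⟨u', ?_⟩
  have : (u, v) = (u' * a, u' * (-b)) := by
    rw [Prod.mk.injEq]
    constructor
    · rw [hu']; ring_nf
    · rw [hv', huv]; ring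
  rw [this]
  rfl
end
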